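/- arXiv:1510.04117 — 6 statements merged into one kernel-verified Lean document; each statement's English description precedes it below -/
import Mathlib

section
/- Let S be an inverse monoid with zero 0 and no zero divisors, whose idempotents form a countable chain 0 = e₀ ≤ e₁ ≤ e₂ ≤ ⋯ together with identity e_∞ = 1 (the unique upper bound of {e_i}). Suppose e₁·s = s·e₁ for all s ∈ S. Then the set e₁·(S \ {0}) is a group under the operation of S, with identity e₁. -/
/-- Let `S` be an inverse monoid with zero `z` and no zero divisors, whose
idempotents form a countable chain `z = e 0 ≤ e 1 ≤ e 2 ≤ ⋯` together with the
identity `1` (the unique upper bound of the chain), and suppose `e 1` is central.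
Then `e 1 · (S \ {z})` is a group under the operation of `S`, with identity `e 1`. -/
theorem stmt8 {S : Type*} [Monoid S] (star : S → S)
    (hinv : ∀ s : S, s * star s * s = s ∧ star s * s * star s = star s)
    (huniq : ∀ s t : S, s * t * s = s → t * s * t = t → t = star s)
    (z : S) (hz : ∀ s : S, z * s = z ∧ s * z = z)
    (hnzd : ∀ s t : S, s * t = z → s = z ∨ t = z)
    (e : ℕ → S) (he0 : e 0 = z)
    (heidem : ∀ i, e i * e i = e i)
    (hchain : ∀ i j, i ≤ j → e i * e j = e i)
    (hinj : Function.Injective e)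
    (hidem_char : ∀ x : S, x * x = x → (∃ i, x = e i) ∨ x = 1)
    (hub : ∀ s : S, (∀ i, e i * s = e i) → s * s = s → s = 1)
    (hcentral : ∀ s : S, e 1 * s = s * e 1) :
    let K : Set S := {x | ∃ s : S, s ≠ z ∧ x = e 1 * s}
    (∀ x ∈ K, ∀ y ∈ K, x * y ∈ K) ∧
    (e 1 ∈ K) ∧
    (∀ x ∈ K, e 1 * x = x ∧ x * e 1 = x) ∧
    (∀ x ∈ K, ∃ y ∈ K, x * y = e 1 ∧ y * x = e 1) := by
  intro K
  have he1z : e 1 ≠ z := by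
    rw [← he0]
    intro h
    exact one_ne_zero (hinj h)
  have hK_ne : ∀ x ∈ K, x ≠ z := by
    rintro x ⟨s, hs, rfl⟩ h
    rcases hnzd _ _ h with h1 | h1
    · exact he1z h1
    · exact hs h1
  have hKid : ∀ x ∈ K, e 1 * x = x := by
    rintro x ⟨s, hs, rfl⟩
    rw [← mul_assoc, heidem 1]
  -- e1 absorbs every nonzero idempotent
  have habs : ∀ f : S, f * f = f → f ≠ z → e 1 * f = e 1 := by
    intro f hff hfz
    rcases hidem_char f hff with ⟨i, rfl⟩ | rfl
    · have hi : 1 ≤ i := by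
        rcases Nat.eq_zero_or_pos i with rfl | h
        · exact absurd he0 hfz
        · exact h
      exact hchain 1 i hi
    · exact mul_one _
  refine ⟨?_, ⟨e 1, he1z, (heidem 1).symm⟩, ?_, ?_⟩
  · intro x hx y hy
    refine ⟨x * y, ?_, ?_⟩
    · intro h
      rcases hnzd _ _ h with h1 | h1
      · exact hK_ne x hx h1
      · exact hK_ne y hy h1
    · rw [← mul_assoc, hKid x hx]
  · intro x hx
    exact ⟨hKid x hx, by rw [← hcentral x, hKid x hx]⟩
  · intro x hx
    have hxz := hK_ne x hx
    have hsx : star x ≠ z := by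
      intro h
      have h1 := (hinv x).1
      rw [h, (hz x).2, (hz x).1] at h1
      exact hxz h1.symm
    have hff : (x * star x) * (x * star x) = x * star x := by
      rw [← mul_assoc, (hinv x).1]
    have hfz : x * star x ≠ z := by
      intro h
      rcases hnzd _ _ h with h1 | h1
      · exact hxz h1
      · exact hsx h1
    have hgg : (star x * x) * (star x * x) = star x * x := by
      rw [← mul_assoc, (hinv x).2]
    have hgz : star x * x ≠ z := by
      intro h
      rcases hnzd _ _ h with h1 | h1
      · exact hsx h1
      · exact hxz h1
    refine ⟨e 1 * star x, ⟨star x, hsx, rfl⟩, ?_, ?_⟩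
    · calc x * (e 1 * star x) = x * e 1 * star x := by rw [mul_assoc]
        _ = e 1 * x * star x := by rw [← hcentral x]
        _ = e 1 * (x * star x) := by rw [mul_assoc]
        _ = e 1 := habs _ hff hfz
    · calc e 1 * star x * x = e 1 * (star x * x) := by rw [mul_assoc]
        _ = e 1 := habs _ hgg hgz
end

section
/- Let S be an inverse semigroup with zero 0 and no zero divisors, in which the idempotents form a linearly ordered set, e₁ is the least nonzero idempotent, and e₁ is central. Then for every nonzero s ∈ S, (e₁·s)·(e₁·s)* = e₁ and (e₁·s)*·(e₁·s) = e₁. -/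
/-- In an inverse semigroup with zero `z`, no zero divisors, linearly ordered
idempotents, and least nonzero idempotent `e₁` which is central, for every
nonzero `s` one has `(e₁·s)·(e₁·s)* = e₁` and `(e₁·s)*·(e₁·s) = e₁`. -/
theorem stmt9 {S : Type*} [Semigroup S] (star : S → S)
    (hinv : ∀ s : S, s * star s * s = s ∧ star s * s * star s = star s)
    (huniq : ∀ s t : S, s * t * s = s → t * s * t = t → t = star s)
    (z : S) (hz : ∀ s : S, z * s = z ∧ s * z = z)
    (hnzd : ∀ s t : S, s * t = z → s = z ∨ t = z)
    (hlin : ∀ e f : S, e * e = e → f * f = f → e * f = e ∨ e * f = f)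
    (e₁ : S) (he₁ : e₁ * e₁ = e₁) (he₁z : e₁ ≠ z)
    (hleast : ∀ f : S, f * f = f → f ≠ z → e₁ * f = e₁)
    (hcentral : ∀ s : S, e₁ * s = s * e₁) :
    ∀ s : S, s ≠ z →
      (e₁ * s) * star (e₁ * s) = e₁ ∧ star (e₁ * s) * (e₁ * s) = e₁ := by
  intro s hs
  set t := e₁ * s with ht
  have htz : t ≠ z := by
    intro h
    rcases hnzd e₁ s h with h1 | h1
    · exact he₁z h1
    · exact hs h1
  obtain ⟨h1, h2⟩ := hinv t
  -- f = t * star t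
  have hfidem : (t * star t) * (t * star t) = t * star t := by
    calc (t * star t) * (t * star t) = (t * star t * t) * star t := by
          simp only [mul_assoc]
      _ = t * star t := by rw [h1]
  have hfz : t * star t ≠ z := by
    intro h
    apply htz
    calc t = t * star t * t := h1.symm
      _ = z * t := by rw [h]
      _ = z := (hz t).1
  have hef : e₁ * (t * star t) = t * star t := by
    calc e₁ * (t * star t) = (e₁ * e₁ * s) * star t := by
          simp only [ht, mul_assoc]
      _ = t * star t := by rw [he₁]
  have hf : t * star t = e₁ := by
    rw [← hef, hleast _ hfidem hfz]
  -- g = star t * t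
  have hgidem : (star t * t) * (star t * t) = star t * t := by
    calc (star t * t) * (star t * t) = (star t * t * star t) * t := by
          simp only [mul_assoc]
      _ = star t * t := by rw [h2]
  have hgz : star t * t ≠ z := by
    intro h
    have hst : star t = z := by
      calc star t = star t * t * star t := h2.symm
        _ = z * star t := by rw [h]
        _ = z := (hz _).1
    apply htz
    calc t = t * star t * t := h1.symm
      _ = t * z * t := by rw [hst]
      _ = z := by rw [(hz t).2, (hz t).1]
  have heg : e₁ * (star t * t) = star t * t := by
    calc e₁ * (star t * t) = (star t * t) * e₁ := hcentral _
      _ = star t * (t * e₁) := by rw [mul_assoc]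
      _ = star t * (e₁ * t) := by rw [hcentral]
      _ = star t * (e₁ * e₁ * s) := by simp only [ht, mul_assoc]
      _ = star t * t := by rw [he₁]
  have hg : star t * t = e₁ := by
    rw [← heg, hleast _ hgidem hgz]
  exact ⟨hf, hg⟩
end

section
/- Let G be a group and Λ ⊆ G^ℤ a shift-invariant subgroup of G^ℤ. With 𝔅_k(Λ) the set of k-blocks occurring in elements of Λ (a subgroup of G^k), the follower set F_k(Λ, 1^n) is a normal subgroup of 𝔅_k(Λ): for every a ∈ 𝔅_k(Λ) and g ∈ F_k(Λ, 1^n), a·g·a^{-1} ∈ F_k(Λ, 1^n) (products taken coordinatewise). -/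
/-- Let `Λ ⊆ G^ℤ` be a shift-invariant subgroup. The follower set
`F_k(Λ, 1^n)` is a normal subgroup of the group `𝔅_k(Λ)` of `k`-blocks of `Λ`:
for every `a ∈ 𝔅_k(Λ)` and `g ∈ F_k(Λ, 1^n)`, `a·g·a⁻¹ ∈ F_k(Λ, 1^n)`. -/
theorem stmt12 {G : Type*} [Group G] (Λ : Subgroup (ℤ → G))
    (hshift : ∀ x : ℤ → G, x ∈ Λ ↔ (fun i => x (i + 1)) ∈ Λ)
    (k n : ℕ) (hk : 1 ≤ k) (hn : 1 ≤ n) :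
    let B : Set (Fin k → G) := {a | ∃ x ∈ Λ, ∀ i : Fin k, x ((i.1 : ℤ) + 1) = a i}
    let F : Set (Fin k → G) := {b | ∃ x ∈ Λ,
      (∀ i : Fin n, x ((i.1 : ℤ) + 1) = 1) ∧
      (∀ i : Fin k, x ((n : ℤ) + (i.1 : ℤ) + 1) = b i)}
    ∀ a ∈ B, ∀ g ∈ F, a * g * a⁻¹ ∈ F := by
  intro B F a ha g hg
  -- backward shift lemma
  have hshift' : ∀ (m : ℕ) (x : ℤ → G), x ∈ Λ → (fun i => x (i - (m : ℤ))) ∈ Λ := by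
    intro m
    induction m with
    | zero => intro x hx; simpa using hx
    | succ m ih =>
      intro x hx
      have h := ih x hx
      rw [hshift]
      have : (fun i : ℤ => (fun j : ℤ => x (j - ((m : ℤ) + 1))) (i + 1))
          = fun i : ℤ => x (i - (m : ℤ)) := by
        funext i; ring_nf
      push_cast
      rw [this]
      exact h
  obtain ⟨x, hx, hxa⟩ := ha
  obtain ⟨y, hy, hy1, hyg⟩ := hg
  set x' : ℤ → G := fun i => x (i - (n : ℤ)) with hx'def
  have hx' : x' ∈ Λ := hshift' n x hx
  refine ⟨x' * y * x'⁻¹, mul_mem (mul_mem hx' hy) (inv_mem hx'), ?_, ?_⟩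
  · intro i
    simp [hy1 i]
  · intro i
    have hx'val : x' ((n : ℤ) + (i.1 : ℤ) + 1) = a i := by
      have : ((n : ℤ) + (i.1 : ℤ) + 1) - (n : ℤ) = (i.1 : ℤ) + 1 := by ring
      rw [hx'def]; simp only [this]; exact hxa i
    simp [hx'val, hyg i]
end

section
/- Let G be a group and Λ ⊆ G^ℤ a shift-invariant subgroup. For a ∈ 𝔅_n(Λ) and b ∈ G^k: b belongs to F_k(Λ, a) if and only if b·F_k(Λ, 1^n) = F_k(Λ, a), where the product is coordinatewise. In particular F_k(Λ, a) is a coset of the normal subgroup F_k(Λ, 1^n) in 𝔅_k(Λ). -/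
/-- Let `Λ ⊆ G^ℤ` be a shift-invariant subgroup. For `a ∈ 𝔅_n(Λ)` and
`b ∈ G^k`: `b ∈ F_k(Λ, a)` if and only if `b·F_k(Λ, 1^n) = F_k(Λ, a)`. -/
theorem stmt13 {G : Type*} [Group G] (Λ : Subgroup (ℤ → G))
    (hshift : ∀ x : ℤ → G, x ∈ Λ ↔ (fun i => x (i + 1)) ∈ Λ)
    (k n : ℕ) (hk : 1 ≤ k) (hn : 1 ≤ n) :
    let B : Set (Fin n → G) := {a | ∃ x ∈ Λ, ∀ i : Fin n, x ((i.1 : ℤ) + 1) = a i}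
    let F : (Fin n → G) → Set (Fin k → G) := fun a => {b | ∃ x ∈ Λ,
      (∀ i : Fin n, x ((i.1 : ℤ) + 1) = a i) ∧
      (∀ i : Fin k, x ((n : ℤ) + (i.1 : ℤ) + 1) = b i)}
    ∀ a ∈ B, ∀ b : Fin k → G,
      b ∈ F a ↔ (fun c => b * c) '' F (1 : Fin n → G) = F a := by
  intro B F a ha b
  constructor
  · rintro ⟨x, hx, hxa, hxb⟩
    ext b'
    constructor
    · rintro ⟨c, ⟨y, hy, hy1, hyc⟩, rfl⟩
      refine ⟨x * y, mul_mem hx hy, fun i => ?_, fun i => ?_⟩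
      · simp [Pi.mul_apply, hxa i, hy1 i]
      · simp [Pi.mul_apply, hxb i, hyc i]
    · rintro ⟨x', hx', hx'a, hx'b⟩
      refine ⟨b⁻¹ * b', ⟨x⁻¹ * x', mul_mem (inv_mem hx) hx', fun i => ?_, fun i => ?_⟩,
        by simp⟩
      · simp [Pi.mul_apply, Pi.inv_apply, hxa i, hx'a i]
      · simp [Pi.mul_apply, Pi.inv_apply, hxb i, hx'b i]
  · intro h
    obtain ⟨x, hx, hxa⟩ := ha
    have hb0 : (fun i : Fin k => x ((n : ℤ) + (i.1 : ℤ) + 1)) ∈ F a :=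
      ⟨x, hx, hxa, fun i => rfl⟩
    rw [← h] at hb0
    obtain ⟨c, ⟨y, hy, hy1, hyc⟩, hbc⟩ := hb0
    -- b = (fun i => x (n+i+1)) * c⁻¹, witnessed by x * y⁻¹
    refine ⟨x * y⁻¹, mul_mem hx (inv_mem hy), fun i => ?_, fun i => ?_⟩
    · simp [Pi.mul_apply, Pi.inv_apply, hxa i, hy1 i]
    · have := congrFun hbc i
      simp only [Pi.mul_apply] at this
      simp [Pi.mul_apply, Pi.inv_apply, hyc i, ← this]
end

section
/- Let G be a group and Λ ⊆ G^ℤ a shift-invariant subgroup. For all a, b ∈ 𝔅_n(Λ) and k ≥ 1, the follower sets satisfy F_k(Λ,a)·F_k(Λ,b) = F_k(Λ, a·b) (coordinatewise products of sets), and |F_k(Λ,a)| = |F_k(Λ,b)| (there is a bijection between them). -/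
open Pointwise

/-- Let `Λ ⊆ G^ℤ` be a shift-invariant subgroup. For all `a, b ∈ 𝔅_n(Λ)` and
`k ≥ 1`: `F_k(Λ,a)·F_k(Λ,b) = F_k(Λ,a·b)` (pointwise set products), and
`F_k(Λ,a)` and `F_k(Λ,b)` are in bijection. -/
theorem stmt14 {G : Type*} [Group G] (Λ : Subgroup (ℤ → G))
    (hshift : ∀ x : ℤ → G, x ∈ Λ ↔ (fun i => x (i + 1)) ∈ Λ)
    (k n : ℕ) (hk : 1 ≤ k) (hn : 1 ≤ n) :
    let B : Set (Fin n → G) := {a | ∃ x ∈ Λ, ∀ i : Fin n, x ((i.1 : ℤ) + 1) = a i}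
    let F : (Fin n → G) → Set (Fin k → G) := fun a => {b | ∃ x ∈ Λ,
      (∀ i : Fin n, x ((i.1 : ℤ) + 1) = a i) ∧
      (∀ i : Fin k, x ((n : ℤ) + (i.1 : ℤ) + 1) = b i)}
    ∀ a ∈ B, ∀ b ∈ B,
      F a * F b = F (a * b) ∧ Nonempty (F a ≃ F b) := by
  intro B F a ha b hb
  obtain ⟨x, hx, hxa⟩ := ha
  obtain ⟨y, hy, hyb⟩ := hb
  constructor
  · ext c
    constructor
    · rintro ⟨u, ⟨z, hz, hza, hzu⟩, v, ⟨w, hw, hwb, hwv⟩, rfl⟩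
      refine ⟨z * w, mul_mem hz hw, fun i => ?_, fun i => ?_⟩
      · simp [Pi.mul_apply, hza i, hwb i]
      · simp [Pi.mul_apply, hzu i, hwv i]
    · rintro ⟨z, hz, hza, hzc⟩
      refine ⟨fun i => x ((n : ℤ) + (i.1 : ℤ) + 1),
        ⟨x, hx, hxa, fun i => rfl⟩,
        fun i => (x ((n : ℤ) + (i.1 : ℤ) + 1))⁻¹ * c i,
        ⟨x⁻¹ * z, mul_mem (inv_mem hx) hz, fun i => ?_, fun i => ?_⟩, ?_⟩
      · simp [Pi.mul_apply, Pi.inv_apply, hza i, hxa i, Pi.mul_apply, mul_assoc]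
      · simp [Pi.mul_apply, Pi.inv_apply, hzc i]
      · funext i
        simp [Pi.mul_apply, mul_assoc]
  · refine ⟨{
      toFun := fun s => ⟨fun i => y ((n : ℤ) + (i.1 : ℤ) + 1) *
          ((x ((n : ℤ) + (i.1 : ℤ) + 1))⁻¹ * s.1 i), ?_⟩
      invFun := fun t => ⟨fun i => x ((n : ℤ) + (i.1 : ℤ) + 1) *
          ((y ((n : ℤ) + (i.1 : ℤ) + 1))⁻¹ * t.1 i), ?_⟩
      left_inv := ?_
      right_inv := ?_ }⟩
    · obtain ⟨s, z, hz, hza, hzs⟩ := s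
      refine ⟨y * (x⁻¹ * z), mul_mem hy (mul_mem (inv_mem hx) hz), fun i => ?_, fun i => ?_⟩
      · simp [Pi.mul_apply, Pi.inv_apply, hza i, hxa i, hyb i]
      · simp [Pi.mul_apply, Pi.inv_apply, hzs i]
    · obtain ⟨t, z, hz, hzb, hzt⟩ := t
      refine ⟨x * (y⁻¹ * z), mul_mem hx (mul_mem (inv_mem hy) hz), fun i => ?_, fun i => ?_⟩
      · simp [Pi.mul_apply, Pi.inv_apply, hzb i, hxa i, hyb i]
      · simp [Pi.mul_apply, Pi.inv_apply, hzt i]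
    · rintro ⟨s, hs⟩
      ext i
      simp [mul_assoc]
    · rintro ⟨t, ht⟩
      ext i
      simp [mul_assoc]
end

section
/- Let G be a group and Λ ⊆ G^ℤ a shift-invariant subgroup. For k, n ≥ 1, the quotient group 𝔅_n(Λ)/P_n(Λ,1^k) of n-blocks modulo the predecessor subgroup is isomorphic, as a group, to the quotient 𝔅_k(Λ)/F_k(Λ,1^n); an isomorphism sends the coset F_k(Λ,a) to P_n(Λ,b) for any b ∈ F_k(Λ,a). In particular the set of distinct follower sets {F_k(Λ,a) : a ∈ 𝔅_n(Λ)} and the set of distinct predecessor sets {P_n(Λ,b) : b ∈ 𝔅_k(Λ)} have the same cardinality. -/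
/-!
Both families are the fibres of one relation: `(a, b)` is the pair (first `n`-block, following
`k`-block) of a point of `Λ`. Since `Λ` is a group, this relation is a subgroup `H` of
`G^n × G^k`, and for any subgroup `H ≤ A × B` the nonempty fibres `{b | (a, b) ∈ H}` and
`{a | (a, b) ∈ H}` are cosets, matched bijectively and multiplicatively by `(a, b) ∈ H`.
By shift invariance, the `k`-blocks are exactly the blocks that follow some `n`-block.
-/

open Pointwise Set

namespace Subgroup

variable {A B : Type*} [Group A] [Group B] (H : Subgroup (A × B))

def fiber (a : A) : Set B := {b | (a, b) ∈ H}

def swap : Subgroup (B × A) := H.comap (MulEquiv.prodComm : B × A ≃* A × B).toMonoidHom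

def fiberTransfer (s : Set B) : Set A := ⋃ b ∈ s, H.swap.fiber b

variable {H} {a a' : A} {b b' : B}

theorem mem_fiber : b ∈ H.fiber a ↔ (a, b) ∈ H := Iff.rfl

theorem mem_swap_fiber : a ∈ H.swap.fiber b ↔ (a, b) ∈ H := Iff.rfl

theorem fiber_subset_of_mem (h : (a, b) ∈ H) (h' : (a', b) ∈ H) : H.fiber a ⊆ H.fiber a' :=
  fun c hc => by
    have key : (a', b) * (a, b)⁻¹ * (a, c) = (a', c) := by simp
    exact mem_fiber.mpr (key ▸ H.mul_mem (H.mul_mem h' (H.inv_mem h)) hc)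

theorem fiber_eq_of_mem (h : (a, b) ∈ H) (h' : (a', b) ∈ H) : H.fiber a = H.fiber a' :=
  (fiber_subset_of_mem h h').antisymm (fiber_subset_of_mem h' h)

theorem fiber_mul_fiber (h : (a, b) ∈ H) : H.fiber a * H.fiber a' = H.fiber (a * a') := by
  ext c
  constructor
  · rintro ⟨u, hu, v, hv, rfl⟩
    exact H.mul_mem hu hv
  · intro hc
    have key : (a, b)⁻¹ * (a * a', c) = (a', b⁻¹ * c) := by simp
    exact ⟨b, h, b⁻¹ * c, mem_fiber.mpr (key ▸ H.mul_mem (H.inv_mem h) hc),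
      mul_inv_cancel_left b c⟩

theorem fiberTransfer_fiber (h : (a, b) ∈ H) : H.fiberTransfer (H.fiber a) = H.swap.fiber b :=
  (iUnion₂_subset fun _ hb' => (fiber_eq_of_mem (H := H.swap) hb' h).le).antisymm
    (subset_biUnion_of_mem (u := H.swap.fiber) h)

theorem fiberTransfer_fiber_mul_fiber (h : (a, b) ∈ H) (h' : (a', b') ∈ H) :
    H.fiberTransfer (H.fiber a * H.fiber a') =
      H.fiberTransfer (H.fiber a) * H.fiberTransfer (H.fiber a') := by
  rw [fiber_mul_fiber h, fiberTransfer_fiber (H.mul_mem h h'), fiberTransfer_fiber h,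
    fiberTransfer_fiber h', fiber_mul_fiber (H := H.swap) h]

variable (H) in
theorem bijOn_fiberTransfer :
    BijOn H.fiberTransfer (H.fiber '' {a | (H.fiber a).Nonempty})
      (H.swap.fiber '' {b | (H.swap.fiber b).Nonempty}) := by
  refine ⟨?_, ?_, ?_⟩
  · rintro _ ⟨a, ⟨b, hb⟩, rfl⟩
    exact ⟨b, ⟨a, hb⟩, (fiberTransfer_fiber hb).symm⟩
  · rintro _ ⟨a, ⟨b, hb⟩, rfl⟩ _ ⟨a', ⟨b', hb'⟩, rfl⟩ heq
    rw [fiberTransfer_fiber hb, fiberTransfer_fiber hb'] at heq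
    have hab' : a ∈ H.swap.fiber b' := heq ▸ mem_swap_fiber.mpr hb
    exact fiber_eq_of_mem hab' hb'
  · rintro _ ⟨b, ⟨a, ha⟩, rfl⟩
    exact ⟨H.fiber a, ⟨a, ⟨b, ha⟩, rfl⟩, fiberTransfer_fiber ha⟩

end Subgroup

theorem shift_mem_iff_of_shift_invariant {α : Type*} {S : Set (ℤ → α)}
    (hS : ∀ x : ℤ → α, x ∈ S ↔ (fun i => x (i + 1)) ∈ S) (x : ℤ → α) (m : ℤ) :
    x ∈ S ↔ (fun i => x (i + m)) ∈ S := by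
  induction m using Int.induction_on with
  | zero => simp
  | succ m ih =>
    rw [ih, hS]
    simp only [add_assoc, add_comm (1 : ℤ)]
  | pred m ih =>
    rw [ih, hS (fun i => x (i + (-(m : ℤ) - 1)))]
    congr! 3
    ring

def blockPair (G : Type*) [Group G] (n k : ℕ) : (ℤ → G) →* (Fin n → G) × (Fin k → G) where
  toFun x := (fun i => x (i + 1), fun i => x (n + i + 1))
  map_one' := rfl
  map_mul' _ _ := rfl

section Blocks

variable {G : Type*} [Group G] {Λ : Subgroup (ℤ → G)} {n k : ℕ}

theorem mem_map_blockPair {a : Fin n → G} {b : Fin k → G} :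
    (a, b) ∈ Λ.map (blockPair G n k) ↔ ∃ x ∈ Λ,
      (∀ i : Fin n, x ((i.1 : ℤ) + 1) = a i) ∧ (∀ i : Fin k, x ((n : ℤ) + (i.1 : ℤ) + 1) = b i) := by
  simp [Subgroup.mem_map, blockPair, Prod.ext_iff, funext_iff]

theorem exists_block_iff_fiber_nonempty (a : Fin n → G) :
    (∃ x ∈ Λ, ∀ i : Fin n, x ((i.1 : ℤ) + 1) = a i) ↔
      ((Λ.map (blockPair G n k)).fiber a).Nonempty := by
  simp only [Set.Nonempty, Subgroup.mem_fiber, mem_map_blockPair]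
  constructor
  · rintro ⟨x, hx, ha⟩
    exact ⟨_, x, hx, ha, fun _ => rfl⟩
  · rintro ⟨_, x, hx, ha, -⟩
    exact ⟨x, hx, ha⟩

theorem exists_block_iff_swap_fiber_nonempty
    (hshift : ∀ x : ℤ → G, x ∈ Λ ↔ (fun i => x (i + 1)) ∈ Λ) (b : Fin k → G) :
    (∃ x ∈ Λ, ∀ i : Fin k, x ((i.1 : ℤ) + 1) = b i) ↔
      ((Λ.map (blockPair G n k)).swap.fiber b).Nonempty := by
  have hshift' := shift_mem_iff_of_shift_invariant (S := (Λ : Set (ℤ → G))) hshift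
  simp only [Set.Nonempty, Subgroup.mem_swap_fiber, mem_map_blockPair]
  constructor
  · rintro ⟨x, hx, hb⟩
    refine ⟨_, fun j => x (j + -n), (hshift' x _).mp hx, fun _ => rfl, fun i => ?_⟩
    rw [← hb i]
    exact congrArg x (by ring)
  · rintro ⟨_, x, hx, -, hb⟩
    refine ⟨fun j => x (j + n), (hshift' x _).mp hx, fun i => ?_⟩
    rw [← hb i]
    exact congrArg x (by ring)

end Blocks

theorem stmt16_general {G : Type*} [Group G] (Λ : Subgroup (ℤ → G))
    (hshift : ∀ x : ℤ → G, x ∈ Λ ↔ (fun i => x (i + 1)) ∈ Λ)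
    (k n : ℕ) :
    let Bn : Set (Fin n → G) := {a | ∃ x ∈ Λ, ∀ i : Fin n, x ((i.1 : ℤ) + 1) = a i}
    let Bk : Set (Fin k → G) := {b | ∃ x ∈ Λ, ∀ i : Fin k, x ((i.1 : ℤ) + 1) = b i}
    let F : (Fin n → G) → Set (Fin k → G) := fun a => {b | ∃ x ∈ Λ,
      (∀ i : Fin n, x ((i.1 : ℤ) + 1) = a i) ∧
      (∀ i : Fin k, x ((n : ℤ) + (i.1 : ℤ) + 1) = b i)}
    let P : (Fin k → G) → Set (Fin n → G) := fun b => {a | ∃ x ∈ Λ,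
      (∀ i : Fin n, x ((i.1 : ℤ) + 1) = a i) ∧
      (∀ i : Fin k, x ((n : ℤ) + (i.1 : ℤ) + 1) = b i)}
    let famF : Set (Set (Fin k → G)) := {s | ∃ a ∈ Bn, s = F a}
    let famP : Set (Set (Fin n → G)) := {s | ∃ b ∈ Bk, s = P b}
    ∃ τ : Set (Fin k → G) → Set (Fin n → G),
      Set.BijOn τ famF famP ∧
      (∀ a ∈ Bn, ∀ b ∈ F a, τ (F a) = P b) ∧
      (∀ a ∈ Bn, ∀ a' ∈ Bn, τ (F a * F a') = τ (F a) * τ (F a')) := by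
  intro Bn Bk F P famF famP
  set H := Λ.map (blockPair G n k)
  have hF : F = H.fiber := by
    funext a; ext b; exact mem_map_blockPair.symm
  have hP : P = H.swap.fiber := by
    funext b; ext a; exact mem_map_blockPair.symm
  have hBn : Bn = {a | (H.fiber a).Nonempty} := by
    ext a; exact exists_block_iff_fiber_nonempty a
  have hBk : Bk = {b | (H.swap.fiber b).Nonempty} := by
    ext b; exact exists_block_iff_swap_fiber_nonempty hshift b
  clear_value Bn Bk F P
  subst hF hP hBn hBk
  exact ⟨H.fiberTransfer, by simpa only [Set.image, eq_comm] using H.bijOn_fiberTransfer,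
    fun _ _ _ hb => Subgroup.fiberTransfer_fiber hb, fun _ ⟨_, hb⟩ _ ⟨_, hb'⟩ => Subgroup.fiberTransfer_fiber_mul_fiber hb hb'⟩

/-- Let `Λ ⊆ G^ℤ` be a shift-invariant subgroup. The family of follower sets
`{F_k(Λ,a) : a ∈ 𝔅_n(Λ)}` (the cosets of `F_k(Λ,1^n)`) and the family of
predecessor sets `{P_n(Λ,b) : b ∈ 𝔅_k(Λ)}` (the cosets of `P_n(Λ,1^k)`) are
isomorphic as groups: there is a bijection `τ` between the two families which
sends `F_k(Λ,a)` to `P_n(Λ,b)` for any `b ∈ F_k(Λ,a)`, and which is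
multiplicative for the pointwise product of sets. -/
theorem stmt16 {G : Type*} [Group G] (Λ : Subgroup (ℤ → G))
    (hshift : ∀ x : ℤ → G, x ∈ Λ ↔ (fun i => x (i + 1)) ∈ Λ)
    (k n : ℕ) (hk : 1 ≤ k) (hn : 1 ≤ n) :
    let Bn : Set (Fin n → G) := {a | ∃ x ∈ Λ, ∀ i : Fin n, x ((i.1 : ℤ) + 1) = a i}
    let Bk : Set (Fin k → G) := {b | ∃ x ∈ Λ, ∀ i : Fin k, x ((i.1 : ℤ) + 1) = b i}
    let F : (Fin n → G) → Set (Fin k → G) := fun a => {b | ∃ x ∈ Λ,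
      (∀ i : Fin n, x ((i.1 : ℤ) + 1) = a i) ∧
      (∀ i : Fin k, x ((n : ℤ) + (i.1 : ℤ) + 1) = b i)}
    let P : (Fin k → G) → Set (Fin n → G) := fun b => {a | ∃ x ∈ Λ,
      (∀ i : Fin n, x ((i.1 : ℤ) + 1) = a i) ∧
      (∀ i : Fin k, x ((n : ℤ) + (i.1 : ℤ) + 1) = b i)}
    let famF : Set (Set (Fin k → G)) := {s | ∃ a ∈ Bn, s = F a}
    let famP : Set (Set (Fin n → G)) := {s | ∃ b ∈ Bk, s = P b}
    ∃ τ : Set (Fin k → G) → Set (Fin n → G),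
      Set.BijOn τ famF famP ∧
      (∀ a ∈ Bn, ∀ b ∈ F a, τ (F a) = P b) ∧
      (∀ a ∈ Bn, ∀ a' ∈ Bn, τ (F a * F a') = τ (F a) * τ (F a')) :=
  stmt16_general Λ hshift k n
end
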